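/- arXiv:2104.02440 — 5 statements merged into one kernel-verified Lean document; each statement's English description precedes it below -/
import Mathlib

section
/- Let a_1 ≤ a_2 ≤ ... ≤ a_k be integers with 2 ≤ a_1, and let L be the diagonal form ⟨a_1,...,a_k⟩. Suppose that there are positive integers m and i with i ≤ k such that: (1) m is represented by L; (2) m is not represented by the diagonal form ⟨a_1,...,a_i⟩; (3) m < a_i + a_1. Then there is an index j with i+1 ≤ j ≤ k such that a_j = m. -/
/-! By (2), some representation of `m` uses a coordinate `x_j ≠ 0` with `j > i`, so `a_j ≥ a_i`.
All terms are nonnegative, so `|x_j| ≥ 2` or a second nonzero coordinate `x_l` would force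
`m ≥ a_j + a_l ≥ a_i + a_1`, contradicting (3); hence `m = a_j`. -/

open Finset

section WeightedSumOfSquares

variable {ι : Type*} [Fintype ι] {a x : ι → ℤ}

lemma add_le_sum_mul_sq (ha : ∀ l, 0 ≤ a l) {j l : ι} (hjl : j ≠ l) :
    a j * x j ^ 2 + a l * x l ^ 2 ≤ ∑ t, a t * x t ^ 2 := by
  classical
  rw [← sum_pair (f := fun t => a t * x t ^ 2) hjl]
  exact sum_le_sum_of_subset_of_nonneg (subset_univ _)
    fun t _ _ => mul_nonneg (ha t) (sq_nonneg _)

lemma le_mul_sq_of_ne_zero {b y : ℤ} (hb : 0 ≤ b) (hy : y ≠ 0) : b ≤ b * y ^ 2 :=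
  le_mul_of_one_le_right hb (sq_pos_of_ne_zero hy)

theorem coeff_eq_of_sum_mul_sq_eq {m : ℤ} {j : ι} (ha : ∀ l, 0 ≤ a l)
    (hsum : ∑ l, a l * x l ^ 2 = m) (hxj : x j ≠ 0) (hm : ∀ l, m < a j + a l) :
    a j = m := by
  have hxl : ∀ l ≠ j, x l = 0 := by
    intro l hlj
    by_contra hxl
    have := add_le_sum_mul_sq (x := x) ha hlj.symm
    linarith [hm l, le_mul_sq_of_ne_zero (ha j) hxj, le_mul_sq_of_ne_zero (ha l) hxl]
  have hxj1 : x j ^ 2 = 1 := by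
    by_contra hne
    have hpos : 0 < x j ^ 2 := sq_pos_of_ne_zero hxj
    have htwo : a j * 2 ≤ a j * x j ^ 2 := mul_le_mul_of_nonneg_left (by omega) (ha j)
    have := single_le_sum (fun t _ => mul_nonneg (ha t) (sq_nonneg (x t))) (mem_univ j)
    linarith [hm j]
  rw [← hsum, sum_eq_single j (fun l _ hl => by simp [hxl l hl]) (by simp), hxj1, mul_one]

end WeightedSumOfSquares

/-- An integer `m` is represented by the diagonal quadratic form with coefficients
`a j` for `j` in some index set restricted by the predicate `p`. -/
theorem stmt_0 (k : ℕ) (hk : 0 < k) (a : Fin k → ℤ)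
    (hmono : Monotone a) (h2 : 2 ≤ a ⟨0, hk⟩)
    (m : ℤ) (i : ℕ) (hik : i ≤ k)
    (H1 : ∃ x : Fin k → ℤ, ∑ j, a j * (x j) ^ 2 = m)
    (H2 : ¬ ∃ x : Fin k → ℤ, (∀ j : Fin k, i ≤ (j : ℕ) → x j = 0) ∧
      ∑ j, a j * (x j) ^ 2 = m)
    (H3 : m < a ⟨i - 1, by omega⟩ + a ⟨0, hk⟩) :
    ∃ j : Fin k, i ≤ (j : ℕ) ∧ a j = m := by
  obtain ⟨x, hx⟩ := H1
  obtain ⟨j, hij, hxj⟩ : ∃ j : Fin k, i ≤ (j : ℕ) ∧ x j ≠ 0 := by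
    by_contra! h
    exact H2 ⟨x, h, hx⟩
  have hmin : ∀ l, a ⟨0, hk⟩ ≤ a l := fun l => hmono (Nat.zero_le l)
  refine ⟨j, hij, coeff_eq_of_sum_mul_sq_eq (fun l => by linarith [hmin l]) hx hxj fun l => ?_⟩
  calc m < a ⟨i - 1, by omega⟩ + a ⟨0, hk⟩ := H3
    _ ≤ a j + a l := add_le_add (hmono (show i - 1 ≤ (j : ℕ) by omega)) (hmin l)
end

section
/- Let L = ⟨a_1,...,a_k⟩ be a diagonal form with 2 ≤ a_1 ≤ a_2 ≤ ... ≤ a_k that is T(a_1)-universal. Let r and s be positive integers with r < s, r ≤ a_1 − 1 and s ≤ k − 1. Assume there are integers m_1,...,m_r with a_s < m_1 < m_2 < ... < m_r < a_s + a_1 and indices 1 ≤ l_1 < l_2 < ... < l_{s−r} ≤ s such that: (1) for each i = 1,...,r, m_i is not represented by ⟨a_1,...,a_s⟩; (2) the diagonal form ⟨a_{l_1},...,a_{l_{s−r}}, m_1,...,m_r⟩ is T(a_1)-universal. Then some proper subsequence of (a_1,...,a_k) gives a diagonal form that is T(a_1)-universal (i.e., L is not new). -/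
/-! Each `m_i` lies in `[a_1, a_s + a_1)`, so `L` represents it, and by (1) every
representation uses some `a_j x_j²` with `j > s` and `x_j ≠ 0`. As `2 a_j ≥ a_s + a_1 > m_i`
we get `x_j = ±1`, and since every other nonzero term is at least `a_1`, the representation
is `m_i = a_j` alone. So the `m_i` are distinct coefficients of `L` beyond position `s`, and
the form in (2) is a rearrangement of a subsequence of `(a_1, …, a_k)` of length `s < k`. -/

/-- `m` is represented by the diagonal quadratic form whose coefficients are the
entries of the list `l`. -/
def ListRep (l : List ℤ) (m : ℤ) : Prop :=
  ∃ x : Fin l.length → ℤ, ∑ i, l.get i * (x i) ^ 2 = m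

/-- The diagonal form given by the list `l` represents every integer `≥ n`. -/
def ListUniv (n : ℤ) (l : List ℤ) : Prop :=
  ∀ m : ℤ, n ≤ m → ListRep l m

theorem listRep_cons_iff {c m : ℤ} {l : List ℤ} :
    ListRep (c :: l) m ↔ ∃ y : ℤ, ListRep l (m - c * y ^ 2) := by
  constructor
  · rintro ⟨x, hx⟩
    refine ⟨x 0, fun i => x i.succ, ?_⟩
    change ∑ i : Fin (l.length + 1), _ = m at hx
    rw [Fin.sum_univ_succ] at hx
    exact eq_sub_of_add_eq' hx
  · rintro ⟨y, x, hx⟩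
    refine ⟨Fin.cons y x, ?_⟩
    change ∑ i : Fin (l.length + 1), _ = m
    rw [Fin.sum_univ_succ]
    exact add_eq_of_eq_sub' hx

theorem ListRep.of_perm {l l' : List ℤ} (h : l.Perm l') {m : ℤ} (hm : ListRep l m) :
    ListRep l' m := by
  induction h generalizing m with
  | nil => exact hm
  | cons c _ ih =>
    obtain ⟨y, hy⟩ := listRep_cons_iff.mp hm
    exact listRep_cons_iff.mpr ⟨y, ih hy⟩
  | swap c d l =>
    obtain ⟨y, hy⟩ := listRep_cons_iff.mp hm
    obtain ⟨z, hz⟩ := listRep_cons_iff.mp hy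
    refine listRep_cons_iff.mpr ⟨z, listRep_cons_iff.mpr ⟨y, ?_⟩⟩
    rwa [sub_right_comm]
  | trans _ _ ih₁ ih₂ => exact ih₂ (ih₁ hm)

theorem ListUniv.of_perm {n : ℤ} {l l' : List ℤ} (h : l.Perm l') (hl : ListUniv n l) :
    ListUniv n l' :=
  fun m hm => (hl m hm).of_perm h

theorem listRep_ofFn_iff {k : ℕ} {a : Fin k → ℤ} {m : ℤ} :
    ListRep (List.ofFn a) m ↔ ∃ x : Fin k → ℤ, ∑ j, a j * x j ^ 2 = m := by
  constructor
  · rintro ⟨x, rfl⟩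
    exact ⟨x ∘ Fin.cast List.length_ofFn.symm,
      Fintype.sum_equiv (finCongr List.length_ofFn).symm _ _ (fun _ => by simp [Fin.cast])⟩
  · rintro ⟨x, rfl⟩
    exact ⟨x ∘ Fin.cast List.length_ofFn,
      Fintype.sum_equiv (finCongr List.length_ofFn) _ _ (fun _ => by simp [Fin.cast])⟩

theorem List.exists_sublist_perm_ofFn_comp {α : Type*} {k n : ℕ} (a : Fin k → α)
    {g : Fin n → Fin k} (hg : Function.Injective g) :
    ∃ l : List α, l.Sublist (List.ofFn a) ∧ l.Perm (List.ofFn (a ∘ g)) := by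
  obtain ⟨l, hperm, hsub⟩ : (List.ofFn g).Subperm (List.finRange k) :=
    (List.nodup_ofFn.mpr hg).subperm fun j _ => List.mem_finRange j
  refine ⟨l.map a, ?_, ?_⟩
  · rw [List.ofFn_eq_map]
    exact hsub.map a
  · rw [← List.map_ofFn]
    exact hperm.map a

theorem sum_mul_sq_eq_of_lt_add {ι : Type*} [DecidableEq ι] {s : Finset ι} {a x : ι → ℤ}
    {c : ℤ} (hc : 0 < c) (ha : ∀ i ∈ s, c ≤ a i) {j : ι} (hj : j ∈ s) (hxj : x j ≠ 0)
    (hlt : ∑ i ∈ s, a i * x i ^ 2 < a j + c) :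
    ∑ i ∈ s, a i * x i ^ 2 = a j := by
  have ha₀ (i) (hi : i ∈ s) : 0 ≤ a i := hc.le.trans (ha i hi)
  have hterm (i) (hi : i ∈ s.erase j) : 0 ≤ a i * x i ^ 2 :=
    mul_nonneg (ha₀ i (Finset.mem_of_mem_erase hi)) (sq_nonneg _)
  have one_le_sq {y : ℤ} (hy : y ≠ 0) : 1 ≤ y ^ 2 :=
    (one_le_sq_iff_one_le_abs y).mpr (Int.one_le_abs hy)
  rw [← Finset.add_sum_erase s _ hj] at hlt ⊢
  have hxj_sq : x j ^ 2 = 1 := by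
    by_contra hne
    have h2 : 2 ≤ x j ^ 2 := by have := one_le_sq hxj; omega
    nlinarith [mul_le_mul_of_nonneg_left h2 (ha₀ j hj), ha j hj, Finset.sum_nonneg hterm]
  rw [hxj_sq, mul_one] at hlt ⊢
  suffices ∑ i ∈ s.erase j, a i * x i ^ 2 = 0 by rw [this, add_zero]
  refine Finset.sum_eq_zero fun i hi => ?_
  rcases eq_or_ne (x i) 0 with hxi | hxi
  · simp [hxi]
  · have hi' := Finset.mem_of_mem_erase hi
    have := Finset.single_le_sum hterm hi
    nlinarith [mul_le_mul_of_nonneg_left (one_le_sq hxi) (ha₀ i hi'), ha i hi']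

theorem exists_coeff_eq_of_not_rep_prefix {k s : ℕ} {a : Fin k → ℤ} {b c m : ℤ} (hc : 0 < c)
    (ha : ∀ j, c ≤ a j) (hb : ∀ j : Fin k, s ≤ (j : ℕ) → b ≤ a j) (hm : m < b + c)
    (hrep : ListRep (List.ofFn a) m)
    (hnot : ¬ ∃ x : Fin k → ℤ, (∀ j : Fin k, s ≤ (j : ℕ) → x j = 0) ∧ ∑ j, a j * x j ^ 2 = m) :
    ∃ j : Fin k, s ≤ (j : ℕ) ∧ a j = m := by
  obtain ⟨x, hx⟩ := listRep_ofFn_iff.mp hrep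
  obtain ⟨j, hjs, hxj⟩ : ∃ j : Fin k, s ≤ (j : ℕ) ∧ x j ≠ 0 := by
    by_contra! h
    exact hnot ⟨x, h, hx⟩
  refine ⟨j, hjs, ?_⟩
  rw [← hx] at hm ⊢
  exact (sum_mul_sq_eq_of_lt_add hc (fun i _ => ha i) (Finset.mem_univ j) hxj
    (hm.trans_le (by linarith [hb j hjs]))).symm

theorem stmt_1 (k : ℕ) (hk : 0 < k) (a : Fin k → ℤ)
    (hmono : Monotone a) (h2 : 2 ≤ a ⟨0, hk⟩)
    (huniv : ListUniv (a ⟨0, hk⟩) (List.ofFn a))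
    (r s : ℕ) (hr : 0 < r) (hrs : r < s)
    (hsk : s ≤ k - 1)
    (mv : Fin r → ℤ) (hmv : StrictMono mv)
    (hm1 : a ⟨s - 1, by omega⟩ < mv ⟨0, hr⟩)
    (hmr : mv ⟨r - 1, by omega⟩ < a ⟨s - 1, by omega⟩ + a ⟨0, hk⟩)
    (lidx : Fin (s - r) → Fin k) (hlmono : StrictMono lidx)
    (hls : ∀ t : Fin (s - r), (lidx t : ℕ) < s)
    (H1 : ∀ i : Fin r, ¬ ∃ x : Fin k → ℤ,
      (∀ j : Fin k, s ≤ (j : ℕ) → x j = 0) ∧ ∑ j, a j * (x j) ^ 2 = mv i)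
    (H2 : ListUniv (a ⟨0, hk⟩) (List.ofFn (fun t => a (lidx t)) ++ List.ofFn mv)) :
    ∃ l' : List ℤ, List.Sublist l' (List.ofFn a) ∧ l' ≠ List.ofFn a ∧ ListUniv (a ⟨0, hk⟩) l' := by
  have hmin (j : Fin k) : a ⟨0, hk⟩ ≤ a j := hmono (Nat.zero_le _)
  have hm_coeff (i : Fin r) : ∃ j : Fin k, s ≤ (j : ℕ) ∧ a j = mv i := by
    have hlo : mv ⟨0, hr⟩ ≤ mv i := hmv.monotone (Nat.zero_le _)
    have hhi : mv i ≤ mv ⟨r - 1, by omega⟩ := hmv.monotone (Nat.le_sub_one_of_lt i.2)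
    exact exists_coeff_eq_of_not_rep_prefix (b := a ⟨s - 1, by omega⟩) (by omega) hmin
      (fun j hj => hmono (show s - 1 ≤ (j : ℕ) by omega)) (by omega)
      (huniv _ (by linarith [hmin ⟨s - 1, by omega⟩])) (H1 i)
  choose j hjs hja using hm_coeff
  have hg : Function.Injective (Fin.append lidx j) := by
    refine Fin.append_injective_iff.mpr ⟨hlmono.injective, ?_, fun t i h => ?_⟩
    · exact fun i i' h => hmv.injective (by rw [← hja, h, hja])
    · have := hls t
      rw [h] at this
      have := hjs i
      omega
  obtain ⟨l', hsub, hperm⟩ := List.exists_sublist_perm_ofFn_comp a hg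
  rw [← List.map_ofFn, List.ofFn_fin_append, List.map_append, List.map_ofFn, List.map_ofFn,
    show a ∘ j = mv from funext hja] at hperm
  refine ⟨l', hsub, fun h => ?_, H2.of_perm hperm.symm⟩
  have := hperm.length_eq
  simp only [h, List.length_append, List.length_ofFn] at this
  omega
end

section
/- Let n be an integer greater than 1 and let L = ⟨a_1,...,a_k⟩ with a_1 ≤ ... ≤ a_k positive integers be a diagonal tight T(n)-universal form. Then either (n, n+1, n+2, ..., 2n) is a subsequence of (a_1,...,a_k), or (n, n, n+1, n+2, ..., 2n−1) is a subsequence of (a_1,...,a_k). -/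
/-- The diagonal form given by `l` is tight `T(n)`-universal: the nonzero integers
it represents are exactly the integers `≥ n`. -/
def ListTight (n : ℕ) (l : List ℤ) : Prop :=
  ∀ m : ℤ, m ≠ 0 → (ListRep l m ↔ (n : ℤ) ≤ m)

/-! Since the form is tight, every nonzero coefficient is represented, hence is at least `n`.
A nonzero term `a x²` with `x² ≠ 1` is then at least `4n`, so a representation of some
`m ∈ [n, 2n]` uses either a single term `a · 1² = m`, or two terms each equal to `n`, which forces
`m = 2n` and a repeated coefficient `n`. Thus `n, …, 2n - 1` all occur among the coefficients,
together with `2n` or a second copy of `n`, and sortedness turns this into a sublist. -/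

lemma ListRep.of_mem {l : List ℤ} {a : ℤ} (ha : a ∈ l) : ListRep l a := by
  obtain ⟨i, rfl⟩ := List.mem_iff_get.mp ha
  exact ⟨Pi.single i 1, by simp [Pi.single_apply]⟩

namespace ListTight

variable {n : ℕ} {l : List ℤ}

lemma le_of_mem (h : ListTight n l) {a : ℤ} (ha : a ∈ l) (ha0 : a ≠ 0) : (n : ℤ) ≤ a :=
  (h a ha0).mp (.of_mem ha)

lemma listRep_of_le (h : ListTight n l) (hn : 0 < n) {m : ℤ} (hm : (n : ℤ) ≤ m) :
    ListRep l m :=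
  (h m (by omega)).mpr hm

end ListTight

lemma sq_eq_one_of_mul_sq_lt {n a x : ℤ} (hn : 0 ≤ n) (ha : n ≤ a) (hx : x ≠ 0)
    (h : a * x ^ 2 < 4 * n) : x ^ 2 = 1 := by
  have habs : |x| = 1 := by
    by_contra hne
    have : 2 ≤ |x| := by have := Int.one_le_abs hx; omega
    have : 4 ≤ x ^ 2 := by nlinarith [sq_abs x]
    nlinarith
  rw [← sq_abs, habs, one_pow]

lemma Fintype.exists_eq_sum_or_exists_pair_eq {ι : Type*} [Fintype ι] [DecidableEq ι]
    {f : ι → ℤ} {n : ℤ} (hf : ∀ i, f i = 0 ∨ n ≤ f i) (hpos : 0 < ∑ i, f i)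
    (hle : ∑ i, f i ≤ 2 * n) :
    (∃ i, f i = ∑ j, f j) ∨ ∑ i, f i = 2 * n ∧ ∃ i j, i ≠ j ∧ f i = n ∧ f j = n := by
  have hn : 0 < n := by omega
  have hnonneg : ∀ i, 0 ≤ f i := fun i => by rcases hf i with h | h <;> omega
  obtain ⟨i, -, hi⟩ := Finset.exists_ne_zero_of_sum_ne_zero hpos.ne'
  by_cases hj : ∃ j, j ≠ i ∧ f j ≠ 0
  · obtain ⟨j, hji, hj⟩ := hj
    have hpair : f i + f j ≤ ∑ k, f k := by
      rw [← Finset.sum_pair hji.symm]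
      exact Finset.sum_le_sum_of_subset_of_nonneg (Finset.subset_univ _) fun k _ _ => hnonneg k
    have := hf i
    have := hf j
    exact Or.inr ⟨by omega, i, j, hji.symm, by omega, by omega⟩
  · push Not at hj
    exact Or.inl ⟨i, (Fintype.sum_eq_single i hj).symm⟩

lemma ListRep.mem_or_duplicate {l : List ℤ} {n m : ℤ} (hn : 0 < n)
    (hl : ∀ a ∈ l, a ≠ 0 → n ≤ a) (hm : ListRep l m) (hm0 : 0 < m) (hm2 : m ≤ 2 * n) :
    m ∈ l ∨ (m = 2 * n ∧ l.Duplicate n) := by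
  obtain ⟨x, rfl⟩ := hm
  have hcoeff : ∀ i, l.get i * x i ^ 2 ≠ 0 → n ≤ l.get i ∧ x i ≠ 0 := fun i hi =>
    ⟨hl _ (l.get_mem i) (left_ne_zero_of_mul hi),
      (pow_ne_zero_iff two_ne_zero).mp (right_ne_zero_of_mul hi)⟩
  have hterm : ∀ i, l.get i * x i ^ 2 = 0 ∨ n ≤ l.get i * x i ^ 2 := by
    intro i
    refine or_iff_not_imp_left.mpr fun hi => ?_
    obtain ⟨ha, hx⟩ := hcoeff i hi
    have : 0 < x i ^ 2 := by positivity
    nlinarith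
  have hsmall : ∀ i, l.get i * x i ^ 2 ≠ 0 → l.get i * x i ^ 2 ≤ 2 * n →
      l.get i * x i ^ 2 = l.get i := fun i hi hle => by
    obtain ⟨ha, hx⟩ := hcoeff i hi
    rw [sq_eq_one_of_mul_sq_lt hn.le ha hx (by omega), mul_one]
  rcases Fintype.exists_eq_sum_or_exists_pair_eq hterm hm0 hm2 with
    ⟨i, hi⟩ | ⟨hsum, i, j, hij, hi, hj⟩
  · left
    rw [← hi, hsmall i (by omega) (by omega)]
    exact l.get_mem i
  · have hgi : n = l.get i := by rw [← hsmall i (by omega) (by omega), hi]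
    have hgj : n = l.get j := by rw [← hsmall j (by omega) (by omega), hj]
    refine Or.inr ⟨hsum, List.duplicate_iff_exists_distinct_get.mpr ?_⟩
    rcases hij.lt_or_gt with h | h
    · exact ⟨i, j, h, hgi, hgj⟩
    · exact ⟨j, i, h, hgj, hgi⟩

lemma List.Nodup.cons_subperm_of_duplicate {α : Type*} [DecidableEq α] {a : α} {l₁ l₂ : List α}
    (hnd : l₁.Nodup) (hsub : l₁ ⊆ l₂) (hdup : l₂.Duplicate a) : (a :: l₁).Subperm l₂ := by
  rw [List.subperm_ext_iff]
  intro x hx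
  have hle := List.nodup_iff_count_le_one.mp hnd x
  by_cases hxa : x = a
  · subst hxa
    have := List.duplicate_iff_two_le_count.mp hdup
    rw [List.count_cons_self]
    omega
  · rw [List.count_cons_of_ne (Ne.symm hxa)]
    have hx₁ : x ∈ l₁ := (List.mem_cons.mp hx).resolve_left hxa
    exact hle.trans (List.count_pos_iff.mpr (hsub hx₁))

lemma List.pairwise_lt_map_add_range (c : ℤ) (k : ℕ) :
    ((List.range k).map fun j : ℕ => c + j).Pairwise (· < ·) :=
  List.pairwise_map.mpr (List.pairwise_lt_range.imp fun h => by omega)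

lemma List.map_add_range_subset {c : ℤ} {k : ℕ} {l : List ℤ} (h : ∀ j < k, c + j ∈ l) :
    ((List.range k).map fun j : ℕ => c + j) ⊆ l := fun _ hx => by
  obtain ⟨j, hj, rfl⟩ := List.mem_map.mp hx
  exact h j (List.mem_range.mp hj)

theorem stmt_2_general (n : ℕ) (hn : 2 ≤ n) (l : List ℤ)
    (hsort : l.Pairwise (· ≤ ·))
    (htight : ListTight n l) :
    List.Sublist (List.map (fun j => (n : ℤ) + j) (List.range (n + 1))) l ∨
    List.Sublist ((n : ℤ) :: List.map (fun j => (n : ℤ) + j) (List.range n)) l := by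
  -- `List.range` is coerced to `List ℤ` through the list monad; turn that into a `List.map`.
  simp only [List.pure_def, List.bind_eq_flatMap, ← List.map_eq_flatMap, List.map_map,
    Function.comp_def]
  have hrep (m : ℤ) (h₁ : n ≤ m) (h₂ : m ≤ 2 * n) : m ∈ l ∨ (m = 2 * n ∧ l.Duplicate (n : ℤ)) :=
    (htight.listRep_of_le (by omega) h₁).mem_or_duplicate (by omega)
      (fun _ => htight.le_of_mem) (by omega) h₂
  have hlow : ∀ j < n, (n : ℤ) + j ∈ l := fun j hj =>
    (hrep _ (by omega) (by omega)).resolve_right (by omega)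
  have hmono (k : ℕ) := List.pairwise_lt_map_add_range n k
  rcases hrep (2 * n) (by omega) le_rfl with htop | ⟨-, hdup⟩
  · refine .inl <| List.sublist_of_subperm_of_pairwise
      ((hmono _).nodup.subperm (List.map_add_range_subset fun j hj => ?_))
      ((hmono _).imp le_of_lt) hsort
    rcases (Nat.lt_succ_iff.mp hj).lt_or_eq with hj | hj
    · exact hlow j hj
    · rwa [hj, ← two_mul]
  · refine .inr <| List.sublist_of_subperm_of_pairwise
      ((hmono n).nodup.cons_subperm_of_duplicate (List.map_add_range_subset hlow) hdup) ?_ hsort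
    refine List.pairwise_cons.mpr ⟨fun _ hx => ?_, (hmono n).imp le_of_lt⟩
    obtain ⟨j, -, rfl⟩ := List.mem_map.mp hx
    omega

theorem stmt_2 (n : ℕ) (hn : 2 ≤ n) (l : List ℤ)
    (hsort : l.Pairwise (· ≤ ·)) (hpos : ∀ a ∈ l, 0 < a)
    (htight : ListTight n l) :
    List.Sublist (List.map (fun j => (n : ℤ) + j) (List.range (n + 1))) l ∨
    List.Sublist ((n : ℤ) :: List.map (fun j => (n : ℤ) + j) (List.range n)) l :=
  stmt_2_general n hn l hsort htight
end

section
/- Let n be a positive integer and let f be a positive definite integral quadratic form of rank r. Assume that the minimum nonzero value of f on ℤ^r is n or n+1, and that f represents every integer m with n+1 ≤ m ≤ 2n−1. Then the form g(x_1,x_2,x_3,x_4,y) = n(x_1² + x_2² + x_3² + x_4²) + f(y) of rank r+4 is tight T(n)-universal; consequently t(n) ≤ r + 4. -/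
/-- The value of the integral quadratic form given by the symmetric matrix `M`
at the integer vector `x`: `∑ i j, M i j * x i * x j`. -/
def QFval {k : ℕ} (M : Matrix (Fin k) (Fin k) ℤ) (x : Fin k → ℤ) : ℤ :=
  ∑ i, ∑ j, M i j * x i * x j

/-- The quadratic form given by `M` is positive definite. -/
def QFPosDef {k : ℕ} (M : Matrix (Fin k) (Fin k) ℤ) : Prop :=
  ∀ x : Fin k → ℤ, x ≠ 0 → 0 < QFval M x

/-- The integer `m` is represented by the quadratic form given by `M`. -/
def QFRep {k : ℕ} (M : Matrix (Fin k) (Fin k) ℤ) (m : ℤ) : Prop :=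
  ∃ x : Fin k → ℤ, QFval M x = m

/-- The quadratic form given by `M` is tight `T(n)`-universal: the set of nonzero
integers it represents is exactly the set of integers `≥ n`. -/
def QFTight (n : ℕ) {k : ℕ} (M : Matrix (Fin k) (Fin k) ℤ) : Prop :=
  ∀ m : ℤ, m ≠ 0 → (QFRep M m ↔ (n : ℤ) ≤ m)

/-!
If every nonzero value of `f` is at least `n`, then `n(x₁² + ⋯ + x₄²) + f(y)` only takes values
`≥ n` away from zero. Conversely, write `m ≥ n` as `m = nq + t` with `q ≥ 1` and `0 ≤ t < n`: for
`t = 0` take `y = 0` and `x₁² + ⋯ + x₄² = q` by Lagrange's four-square theorem; otherwise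
`n + t ∈ [n + 1, 2n - 1]` is a value `f(y)` and `x₁² + ⋯ + x₄² = q - 1`.
-/

open Matrix

@[simp]
lemma QFval_zero {k : ℕ} (M : Matrix (Fin k) (Fin k) ℤ) : QFval M 0 = 0 := by
  simp [QFval]

lemma QFPosDef.QFval_nonneg {k : ℕ} {M : Matrix (Fin k) (Fin k) ℤ} (hM : QFPosDef M)
    (x : Fin k → ℤ) : 0 ≤ QFval M x := by
  rcases eq_or_ne x 0 with rfl | hx
  · simp
  · exact (hM x hx).le

def orthSum {a b : ℕ} (A : Matrix (Fin a) (Fin a) ℤ) (B : Matrix (Fin b) (Fin b) ℤ) :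
    Matrix (Fin (a + b)) (Fin (a + b)) ℤ :=
  reindex finSumFinEquiv finSumFinEquiv (fromBlocks A 0 0 B)

section OrthSum

variable {a b : ℕ} (A : Matrix (Fin a) (Fin a) ℤ) (B : Matrix (Fin b) (Fin b) ℤ)

lemma QFval_orthSum (z : Fin (a + b) → ℤ) :
    QFval (orthSum A B) z =
      QFval A (fun i => z (Fin.castAdd b i)) + QFval B (fun j => z (Fin.natAdd a j)) := by
  simp [QFval, orthSum, Fin.sum_univ_add]

lemma QFval_orthSum_append (x : Fin a → ℤ) (y : Fin b → ℤ) :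
    QFval (orthSum A B) (Fin.append x y) = QFval A x + QFval B y := by
  simp [QFval_orthSum]

lemma QFRep_orthSum_iff (m : ℤ) :
    QFRep (orthSum A B) m ↔ ∃ x y, QFval A x + QFval B y = m := by
  constructor
  · rintro ⟨z, rfl⟩
    exact ⟨_, _, (QFval_orthSum A B z).symm⟩
  · rintro ⟨x, y, rfl⟩
    exact ⟨Fin.append x y, QFval_orthSum_append A B x y⟩

variable {A B}

lemma Matrix.IsSymm.orthSum (hA : A.IsSymm) (hB : B.IsSymm) : (orthSum A B).IsSymm :=
  (hA.fromBlocks (by simp) hB).submatrix _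

lemma QFPosDef.orthSum (hA : QFPosDef A) (hB : QFPosDef B) : QFPosDef (orthSum A B) := by
  intro z hz
  rw [QFval_orthSum]
  have hx := hA.QFval_nonneg (fun i => z (Fin.castAdd b i))
  have hy := hB.QFval_nonneg (fun j => z (Fin.natAdd a j))
  by_contra! hle
  have hx0 : (fun i => z (Fin.castAdd b i)) = 0 := by
    by_contra hne; linarith [hA _ hne]
  have hy0 : (fun j => z (Fin.natAdd a j)) = 0 := by
    by_contra hne; linarith [hB _ hne]
  refine hz (funext fun i => ?_)
  cases i using Fin.addCases with
  | left i => exact congrFun hx0 i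
  | right j => exact congrFun hy0 j

end OrthSum

lemma QFval_smul_one {k : ℕ} (c : ℤ) (x : Fin k → ℤ) :
    QFval (c • (1 : Matrix (Fin k) (Fin k) ℤ)) x = c * ∑ i, x i ^ 2 := by
  simp [QFval, Matrix.one_apply, Finset.mul_sum, sq, mul_assoc]

lemma QFPosDef.smul_one {k : ℕ} {c : ℤ} (hc : 0 < c) :
    QFPosDef (c • (1 : Matrix (Fin k) (Fin k) ℤ)) := by
  intro x hx
  obtain ⟨i, hi⟩ := Function.ne_iff.mp hx
  rw [QFval_smul_one]
  exact mul_pos hc <|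
    Finset.sum_pos' (fun j _ => sq_nonneg _) ⟨i, Finset.mem_univ i, sq_pos_of_ne_zero hi⟩

lemma exists_sum_sq_fin_four_eq {m : ℤ} (hm : 0 ≤ m) : ∃ x : Fin 4 → ℤ, ∑ i, x i ^ 2 = m := by
  obtain ⟨a, b, c, d, h⟩ := Nat.sum_four_squares m.toNat
  refine ⟨![(a : ℤ), b, c, d], ?_⟩
  have h' : ((a ^ 2 + b ^ 2 + c ^ 2 + d ^ 2 : ℕ) : ℤ) = m := by rw [h, Int.toNat_of_nonneg hm]
  simpa [Fin.sum_univ_four] using h'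

section FourSquaresPlusForm

variable {n : ℤ} {r : ℕ} {F : Matrix (Fin r) (Fin r) ℤ}

lemma le_of_smul_sum_sq_add_QFval (hn : 0 ≤ n) (hF : ∀ y, y ≠ 0 → n ≤ QFval F y)
    {x : Fin 4 → ℤ} {y : Fin r → ℤ} (hm : n * ∑ i, x i ^ 2 + QFval F y ≠ 0) :
    n ≤ n * ∑ i, x i ^ 2 + QFval F y := by
  have hS : 0 ≤ n * ∑ i, x i ^ 2 := mul_nonneg hn (Finset.sum_nonneg fun i _ => sq_nonneg _)
  rcases eq_or_ne y 0 with rfl | hy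
  · rw [QFval_zero, add_zero] at hm ⊢
    have hx : 1 ≤ ∑ i, x i ^ 2 := by
      rcases (Finset.sum_nonneg fun i _ => sq_nonneg (x i)).lt_or_eq with h | h
      · exact h
      · simp [← h] at hm
    nlinarith
  · linarith [hF y hy]

lemma exists_smul_sum_sq_add_QFval_eq (hn : 0 < n)
    (hF : ∀ m, n + 1 ≤ m → m ≤ 2 * n - 1 → QFRep F m) {m : ℤ} (hm : n ≤ m) :
    ∃ (x : Fin 4 → ℤ) (y : Fin r → ℤ), n * ∑ i, x i ^ 2 + QFval F y = m := by
  have hdiv : n * (m / n) + m % n = m := Int.mul_ediv_add_emod m n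
  have ht : 0 ≤ m % n := Int.emod_nonneg m hn.ne'
  have htn : m % n < n := Int.emod_lt_of_pos m hn
  have hq : 1 ≤ m / n := by
    by_contra! h
    nlinarith
  rcases ht.eq_or_lt with ht0 | ht0
  · obtain ⟨x, hx⟩ := exists_sum_sq_fin_four_eq (m := m / n) (by omega)
    exact ⟨x, 0, by rw [hx, QFval_zero]; omega⟩
  · obtain ⟨y, hy⟩ := hF (n + m % n) (by omega) (by omega)
    obtain ⟨x, hx⟩ := exists_sum_sq_fin_four_eq (m := m / n - 1) (by omega)
    exact ⟨x, y, by rw [hx, hy]; linarith⟩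

end FourSquaresPlusForm

theorem stmt_12_general (n : ℕ) (hn : 0 < n) (r : ℕ) (F : Matrix (Fin r) (Fin r) ℤ)
    (hsym : F.IsSymm)
    (hmin : IsLeast {m : ℤ | ∃ x : Fin r → ℤ, x ≠ 0 ∧ QFval F x = m} (n : ℤ) ∨
            IsLeast {m : ℤ | ∃ x : Fin r → ℤ, x ≠ 0 ∧ QFval F x = m} ((n : ℤ) + 1))
    (hrep : ∀ m : ℤ, (n : ℤ) + 1 ≤ m → m ≤ 2 * (n : ℤ) - 1 → QFRep F m) :
    (∀ m : ℤ, m ≠ 0 →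
      ((∃ x : Fin 4 → ℤ, ∃ y : Fin r → ℤ,
          (n : ℤ) * (∑ i, (x i) ^ 2) + QFval F y = m) ↔ (n : ℤ) ≤ m)) ∧
    ∃ k ≤ r + 4, ∃ M : Matrix (Fin k) (Fin k) ℤ,
      M.IsSymm ∧ QFPosDef M ∧ QFTight n M := by
  have hn' : (0 : ℤ) < n := by exact_mod_cast hn
  have hlb : ∀ y : Fin r → ℤ, y ≠ 0 → (n : ℤ) ≤ QFval F y := fun y hy => by
    rcases hmin with ⟨-, hb⟩ | ⟨-, hb⟩ <;> linarith [hb ⟨y, hy, rfl⟩]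
  have hvalues : ∀ m : ℤ, m ≠ 0 →
      ((∃ x : Fin 4 → ℤ, ∃ y : Fin r → ℤ, (n : ℤ) * ∑ i, x i ^ 2 + QFval F y = m) ↔
        (n : ℤ) ≤ m) := fun m hm =>
    ⟨fun ⟨_, _, h⟩ => h ▸ le_of_smul_sum_sq_add_QFval hn'.le hlb (h ▸ hm),
      exists_smul_sum_sq_add_QFval_eq hn' hrep⟩
  refine ⟨hvalues, 4 + r, by omega, orthSum ((n : ℤ) • 1) F,
    (isSymm_one.smul _).orthSum hsym,
    (QFPosDef.smul_one hn').orthSum fun y hy => hn'.trans_le (hlb y hy), fun m hm => ?_⟩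
  simpa only [QFRep_orthSum_iff, QFval_smul_one] using hvalues m hm

/-- Lemma: if a positive definite form `f` of rank `r` has minimum nonzero value `n` or
`n+1` and represents all integers in `[n+1, 2n-1]`, then
`n(x₁²+x₂²+x₃²+x₄²) + f(y)` is tight `T(n)`-universal, so `t(n) ≤ r + 4`. -/
theorem stmt_12 (n : ℕ) (hn : 0 < n) (r : ℕ) (F : Matrix (Fin r) (Fin r) ℤ)
    (hsym : F.IsSymm) (hpd : QFPosDef F)
    (hmin : IsLeast {m : ℤ | ∃ x : Fin r → ℤ, x ≠ 0 ∧ QFval F x = m} (n : ℤ) ∨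
            IsLeast {m : ℤ | ∃ x : Fin r → ℤ, x ≠ 0 ∧ QFval F x = m} ((n : ℤ) + 1))
    (hrep : ∀ m : ℤ, (n : ℤ) + 1 ≤ m → m ≤ 2 * (n : ℤ) - 1 → QFRep F m) :
    (∀ m : ℤ, m ≠ 0 →
      ((∃ x : Fin 4 → ℤ, ∃ y : Fin r → ℤ,
          (n : ℤ) * (∑ i, (x i) ^ 2) + QFval F y = m) ↔ (n : ℤ) ≤ m)) ∧
    ∃ k ≤ r + 4, ∃ M : Matrix (Fin k) (Fin k) ℤ,
      M.IsSymm ∧ QFPosDef M ∧ QFTight n M :=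
  stmt_12_general n hn r F hsym hmin hrep
end

section
/- For any positive integer n, t(n) ≤ ⌊(⌊√n⌋ − 1)/2⌋ + ⌊√n⌋ + 7, where ⌊·⌋ denotes the integer part. -/
/-!
Put `h = ⌈n/2⌉`, `s = ⌊√n⌋`, `w = ⌊h/s⌋` and take the form
`(n - h)(∑ xᵢ + ∑ yⱼ + 2z)² + ∑_{i<s} (h + i) xᵢ² + ∑_{1≤j≤w} (n - h + js) yⱼ² + h z² + n ∑ tₖ²`
in `s + w + 5` variables. All diagonal coefficients are at least `h ≥ n/2`, so a vector with two
nonzero coordinates has value `≥ n`, and on a single coordinate the form is `≥ n` by inspection.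
Writing `r = js + i` with `i < s`, `j ≤ w`, the vectors `xᵢ` or `-xᵢ + yⱼ` take the value `n + r`,
and `xᵢ - z` or `xᵢ + yⱼ - z` the value `n + h + r`; for `r < h` these cover `[n, 2n)`, and
Lagrange's four squares theorem on the `tₖ` adds every multiple of `n`.
-/

open Matrix

section Reindex

variable {ι : Type*} [Fintype ι]

lemma QFval_eq_dotProduct_mulVec {k : ℕ} (M : Matrix (Fin k) (Fin k) ℤ) (x : Fin k → ℤ) :
    QFval M x = x ⬝ᵥ M *ᵥ x := by
  simp only [QFval, dotProduct, mulVec, Finset.mul_sum]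
  refine Finset.sum_congr rfl fun i _ => Finset.sum_congr rfl fun j _ => ?_
  ring

lemma QFval_reindex {k : ℕ} (e : ι ≃ Fin k) (M : Matrix ι ι ℤ) (x : Fin k → ℤ) :
    QFval (reindex e e M) x = (x ∘ e) ⬝ᵥ M *ᵥ (x ∘ e) := by
  rw [QFval_eq_dotProduct_mulVec, reindex_apply, submatrix_mulVec_equiv, Equiv.symm_symm,
    dotProduct_comp_equiv_symm]

lemma exists_QFTight_of_le_of_exists_eq (M : Matrix ι ι ℤ) (hM : M.IsSymm) {n : ℕ}
    (hn : 0 < n) (hle : ∀ y ≠ 0, (n : ℤ) ≤ y ⬝ᵥ M *ᵥ y)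
    (hrep : ∀ m : ℤ, n ≤ m → ∃ y, y ⬝ᵥ M *ᵥ y = m) :
    ∃ M' : Matrix (Fin (Fintype.card ι)) (Fin (Fintype.card ι)) ℤ,
      M'.IsSymm ∧ QFPosDef M' ∧ QFTight n M' := by
  set e := Fintype.equivFin ι
  have hval : ∀ x, QFval (reindex e e M) x = (x ∘ e) ⬝ᵥ M *ᵥ (x ∘ e) := QFval_reindex e M
  have hne : ∀ x : Fin (Fintype.card ι) → ℤ, x ≠ 0 → x ∘ e ≠ 0 := fun x hx h0 =>
    hx (funext fun i => by simpa using congrFun h0 (e.symm i))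
  refine ⟨reindex e e M, by simp [IsSymm, hM.eq], fun x hx => ?_, fun m hm => ⟨?_, fun hnm => ?_⟩⟩
  · rw [hval]
    exact lt_of_lt_of_le (by exact_mod_cast hn) (hle _ (hne x hx))
  · rintro ⟨x, rfl⟩
    by_cases hx : x = 0
    · simp [hx, QFval] at hm
    · exact hval x ▸ hle _ (hne x hx)
  · obtain ⟨y, rfl⟩ := hrep m hnm
    exact ⟨y ∘ e.symm, by rw [hval]; simp [Function.comp_def]⟩

end Reindex

section OrthogonalSum

variable {ι κ : Type*} [Fintype ι] [Fintype κ]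

lemma sumElim_dotProduct_fromBlocks_mulVec (A : Matrix ι ι ℤ) (D : Matrix κ κ ℤ)
    (u : ι → ℤ) (z : κ → ℤ) :
    Sum.elim u z ⬝ᵥ fromBlocks A 0 0 D *ᵥ Sum.elim u z = u ⬝ᵥ A *ᵥ u + z ⬝ᵥ D *ᵥ z := by
  simp [fromBlocks_mulVec, sumElim_dotProduct_sumElim]

lemma le_dotProduct_fromBlocks_mulVec {A : Matrix ι ι ℤ} {D : Matrix κ κ ℤ} {N : ℤ}
    (hN : 0 ≤ N) (hA : ∀ u ≠ 0, N ≤ u ⬝ᵥ A *ᵥ u) (hD : ∀ z ≠ 0, N ≤ z ⬝ᵥ D *ᵥ z)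
    {y : ι ⊕ κ → ℤ} (hy : y ≠ 0) : N ≤ y ⬝ᵥ fromBlocks A 0 0 D *ᵥ y := by
  have hA₀ : ∀ u, 0 ≤ u ⬝ᵥ A *ᵥ u := fun u => by
    by_cases hu : u = 0
    · simp [hu]
    · exact hN.trans (hA u hu)
  have hD₀ : ∀ z, 0 ≤ z ⬝ᵥ D *ᵥ z := fun z => by
    by_cases hz : z = 0
    · simp [hz]
    · exact hN.trans (hD z hz)
  rw [← Sum.elim_comp_inl_inr y] at hy ⊢
  rw [sumElim_dotProduct_fromBlocks_mulVec]
  by_cases hu : y ∘ Sum.inl = 0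
  · have hz : y ∘ Sum.inr ≠ 0 := fun hz => hy (by rw [hu, hz]; exact Sum.elim_zero_zero)
    linarith [hA₀ (y ∘ Sum.inl), hD _ hz]
  · linarith [hA _ hu, hD₀ (y ∘ Sum.inr)]

end OrthogonalSum

section SumOfSquares

variable {ι : Type*} [Fintype ι]

lemma dotProduct_smul_one_mulVec [DecidableEq ι] (c : ℤ) (z : ι → ℤ) :
    z ⬝ᵥ (c • (1 : Matrix ι ι ℤ)) *ᵥ z = c * (z ⬝ᵥ z) := by
  rw [smul_mulVec, one_mulVec, dotProduct_smul, smul_eq_mul]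

lemma one_le_dotProduct_self {z : ι → ℤ} (hz : z ≠ 0) : 1 ≤ z ⬝ᵥ z := by
  have h0 : 0 ≤ z ⬝ᵥ z := Finset.sum_nonneg fun i _ => mul_self_nonneg (z i)
  have h1 : z ⬝ᵥ z ≠ 0 := dotProduct_self_eq_zero.not.mpr hz
  omega

lemma exists_dotProduct_self_eq (Z : ℕ) : ∃ z : Fin 4 → ℤ, z ⬝ᵥ z = Z := by
  obtain ⟨a, b, c, d, h⟩ := Nat.sum_four_squares Z
  exact ⟨![a, b, c, d], by simp [dotProduct, Fin.sum_univ_four, ← h, sq]⟩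

end SumOfSquares

section RankOneAddDiagonal

variable {ι : Type*} [DecidableEq ι]

lemma isSymm_smul_vecMulVec_add_diagonal (W : ℤ) (a d : ι → ℤ) :
    (W • vecMulVec a a + diagonal d).IsSymm :=
  (IsSymm.smul (transpose_vecMulVec a a) W).add (isSymm_diagonal d)

lemma dotProduct_smul_vecMulVec_add_diagonal_mulVec [Fintype ι] (W : ℤ) (a d x : ι → ℤ) :
    x ⬝ᵥ (W • vecMulVec a a + diagonal d) *ᵥ x = W * (a ⬝ᵥ x) ^ 2 + ∑ i, d i * x i ^ 2 := by
  rw [add_mulVec, dotProduct_add, smul_mulVec, dotProduct_smul, vecMulVec_mulVec, op_smul_eq_smul,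
    dotProduct_smul, dotProduct_comm x a, smul_eq_mul, smul_eq_mul]
  simp only [dotProduct, mulVec_diagonal]
  congr 1
  · ring
  · exact Finset.sum_congr rfl fun i _ => by ring

lemma le_dotProduct_smul_vecMulVec_add_diagonal_mulVec [Fintype ι] {W N : ℤ} {a d : ι → ℤ}
    (hW : 0 ≤ W) (hd : ∀ i, 0 ≤ d i) (hone : ∀ i, N ≤ W * a i ^ 2 + d i)
    (hpair : ∀ i j, i ≠ j → N ≤ d i + d j) {x : ι → ℤ} (hx : x ≠ 0) :
    N ≤ x ⬝ᵥ (W • vecMulVec a a + diagonal d) *ᵥ x := by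
  rw [dotProduct_smul_vecMulVec_add_diagonal_mulVec]
  have hsq : ∀ j, x j ≠ 0 → 1 ≤ x j ^ 2 := fun j hj =>
    (one_le_sq_iff_one_le_abs _).mpr (Int.one_le_abs hj)
  have hterm : ∀ j, 0 ≤ d j * x j ^ 2 := fun j => mul_nonneg (hd j) (sq_nonneg _)
  have hW₀ : 0 ≤ W * (a ⬝ᵥ x) ^ 2 := mul_nonneg hW (sq_nonneg _)
  obtain ⟨i, hi⟩ : ∃ i, x i ≠ 0 := Function.ne_iff.mp hx
  by_cases htwo : ∃ j ≠ i, x j ≠ 0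
  · obtain ⟨j, hji, hj⟩ := htwo
    have hsub : d i * x i ^ 2 + d j * x j ^ 2 ≤ ∑ k, d k * x k ^ 2 := by
      rw [← Finset.sum_pair (f := fun k => d k * x k ^ 2) hji.symm]
      exact Finset.sum_le_sum_of_subset_of_nonneg (Finset.subset_univ _) fun k _ _ => hterm k
    nlinarith [hpair i j hji.symm, hsq i hi, hsq j hj, hd i, hd j]
  · push Not at htwo
    have hsingle : x = Pi.single i (x i) := funext fun j => by
      by_cases hji : j = i
      · subst hji; simp
      · simp [hji, htwo j hji]
    rw [hsingle, dotProduct_single, Fintype.sum_eq_single i fun j hj => by simp [hj],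
      Pi.single_eq_same]
    nlinarith [hone i, hsq i hi, hd i, mul_nonneg hW (sq_nonneg (a i))]

end RankOneAddDiagonal

section TightForm

variable (n h s w : ℕ)

def coreLin : Fin s ⊕ Fin w ⊕ Unit → ℤ :=
  Sum.elim 1 (Sum.elim 1 fun _ => 2)

def coreDiag : Fin s ⊕ Fin w ⊕ Unit → ℤ :=
  Sum.elim (fun i => h + (i : ℕ)) (Sum.elim (fun j => n - h + ((j : ℕ) + 1) * s) fun _ => h)

def coreMatrix : Matrix (Fin s ⊕ Fin w ⊕ Unit) (Fin s ⊕ Fin w ⊕ Unit) ℤ :=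
  ((n : ℤ) - h) • vecMulVec (coreLin s w) (coreLin s w) + diagonal (coreDiag n h s w)

lemma dotProduct_coreMatrix_mulVec (i : Fin s) (α : ℤ) (B : Fin w → ℤ) (γ : ℤ) :
    Sum.elim (Pi.single i α) (Sum.elim B fun _ => γ) ⬝ᵥ
        coreMatrix n h s w *ᵥ Sum.elim (Pi.single i α) (Sum.elim B fun _ => γ) =
      (n - h) * (α + ∑ j, B j + 2 * γ) ^ 2 + (h + (i : ℕ)) * α ^ 2 +
        ∑ j : Fin w, (n - h + ((j : ℕ) + 1) * s) * B j ^ 2 + h * γ ^ 2 := by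
  rw [coreMatrix, dotProduct_smul_vecMulVec_add_diagonal_mulVec]
  simp only [coreLin, coreDiag, dotProduct, Fintype.sum_sum_type, Sum.elim_inl, Sum.elim_inr,
    Pi.one_apply, one_mul, Finset.sum_pi_single', Finset.mem_univ, if_true, Fintype.sum_unique]
  rw [Fintype.sum_eq_single i fun k hk => by simp [hk], Pi.single_eq_same]
  ring

lemma dotProduct_coreMatrix_mulVec_single (i : Fin s) (j : Fin w) (α β γ : ℤ) :
    Sum.elim (Pi.single i α) (Sum.elim (Pi.single j β) fun _ => γ) ⬝ᵥ
        coreMatrix n h s w *ᵥ Sum.elim (Pi.single i α) (Sum.elim (Pi.single j β) fun _ => γ) =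
      (n - h) * (α + β + 2 * γ) ^ 2 + (h + (i : ℕ)) * α ^ 2 +
        (n - h + ((j : ℕ) + 1) * s) * β ^ 2 + h * γ ^ 2 := by
  rw [dotProduct_coreMatrix_mulVec, Finset.sum_pi_single', if_pos (Finset.mem_univ j),
    Fintype.sum_eq_single j fun k hk => by simp [hk], Pi.single_eq_same]

variable {n h s w}

lemma le_coreDiag (hh : 2 * h ≤ n + s) (t : Fin s ⊕ Fin w ⊕ Unit) :
    (h : ℤ) ≤ coreDiag n h s w t := by
  rcases t with i | j | _
  · simp [coreDiag]
  · have : (s : ℤ) ≤ ((j : ℕ) + 1) * s := by nlinarith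
    simp only [coreDiag, Sum.elim_inl, Sum.elim_inr]
    omega
  · simp [coreDiag]

lemma le_dotProduct_coreMatrix_mulVec (hn : n ≤ 2 * h) (hh : 2 * h ≤ n + 1) (hs : 0 < s)
    {u : Fin s ⊕ Fin w ⊕ Unit → ℤ} (hu : u ≠ 0) : (n : ℤ) ≤ u ⬝ᵥ coreMatrix n h s w *ᵥ u := by
  have hdiag := le_coreDiag (n := n) (h := h) (s := s) (w := w) (by omega)
  refine le_dotProduct_smul_vecMulVec_add_diagonal_mulVec (by omega)
    (fun t => by linarith [hdiag t]) ?_ (fun t t' _ => by linarith [hdiag t, hdiag t']) hu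
  rintro (i | j | _)
  · simp only [coreLin, coreDiag, Sum.elim_inl, Pi.one_apply]
    omega
  · have : (s : ℤ) ≤ ((j : ℕ) + 1) * s := by nlinarith
    simp only [coreLin, coreDiag, Sum.elim_inl, Sum.elim_inr, Pi.one_apply]
    omega
  · simp only [coreLin, coreDiag, Sum.elim_inr]
    omega

lemma exists_dotProduct_coreMatrix_mulVec_eq (hw : h ≤ s * (w + 1)) {r : ℕ} (hr : r < h) :
    (∃ u, u ⬝ᵥ coreMatrix n h s w *ᵥ u = n + r) ∧
      ∃ u, u ⬝ᵥ coreMatrix n h s w *ᵥ u = n + h + r := by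
  have hs : 0 < s := Nat.pos_of_ne_zero fun hs => by rw [hs, zero_mul] at hw; omega
  obtain ⟨i, j, hi, hj, rfl⟩ : ∃ i j, i < s ∧ j ≤ w ∧ r = s * j + i :=
    ⟨r % s, r / s, Nat.mod_lt r hs, Nat.lt_add_one_iff.mp ((Nat.div_lt_iff_lt_mul hs).mpr (by
      rw [mul_comm] at hw; omega)), (Nat.div_add_mod r s).symm⟩
  rcases j with _ | j
  · refine ⟨⟨Sum.elim (Pi.single ⟨i, hi⟩ 1) (Sum.elim 0 fun _ => 0), ?_⟩,
      ⟨Sum.elim (Pi.single ⟨i, hi⟩ 1) (Sum.elim 0 fun _ => -1), ?_⟩⟩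
    all_goals
      rw [dotProduct_coreMatrix_mulVec]
      simp only [Pi.zero_apply, Finset.sum_const_zero, zero_pow two_ne_zero, mul_zero]
      push_cast
      ring
  · have hjw : j < w := by omega
    refine ⟨⟨Sum.elim (Pi.single ⟨i, hi⟩ (-1)) (Sum.elim (Pi.single ⟨j, hjw⟩ 1) fun _ => 0), ?_⟩,
      ⟨Sum.elim (Pi.single ⟨i, hi⟩ 1) (Sum.elim (Pi.single ⟨j, hjw⟩ 1) fun _ => -1), ?_⟩⟩
    all_goals
      rw [dotProduct_coreMatrix_mulVec_single]
      push_cast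
      ring

variable (n h s w) in
def tightMatrix : Matrix ((Fin s ⊕ Fin w ⊕ Unit) ⊕ Fin 4) ((Fin s ⊕ Fin w ⊕ Unit) ⊕ Fin 4) ℤ :=
  fromBlocks (coreMatrix n h s w) 0 0 ((n : ℤ) • 1)

lemma isSymm_tightMatrix : (tightMatrix n h s w).IsSymm :=
  (isSymm_smul_vecMulVec_add_diagonal _ _ _).fromBlocks (by simp) (isSymm_one.smul _)

lemma le_dotProduct_tightMatrix_mulVec (hn : n ≤ 2 * h) (hh : 2 * h ≤ n + 1) (hs : 0 < s)
    {y : (Fin s ⊕ Fin w ⊕ Unit) ⊕ Fin 4 → ℤ} (hy : y ≠ 0) :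
    (n : ℤ) ≤ y ⬝ᵥ tightMatrix n h s w *ᵥ y := by
  refine le_dotProduct_fromBlocks_mulVec (by positivity)
    (fun u hu => le_dotProduct_coreMatrix_mulVec hn hh hs hu) (fun z hz => ?_) hy
  rw [dotProduct_smul_one_mulVec]
  nlinarith [one_le_dotProduct_self hz]

lemma exists_dotProduct_tightMatrix_mulVec_eq (hn₀ : 0 < n) (hn : n ≤ 2 * h)
    (hw : h ≤ s * (w + 1)) {m : ℤ} (hm : n ≤ m) : ∃ y, y ⬝ᵥ tightMatrix n h s w *ᵥ y = m := by
  obtain ⟨Z, δ, hδ, rfl⟩ : ∃ Z δ : ℕ, δ < n ∧ m = n + δ + n * Z := by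
    lift m to ℕ using by omega
    refine ⟨(m - n) / n, (m - n) % n, Nat.mod_lt _ hn₀, ?_⟩
    have := Nat.div_add_mod (m - n) n
    omega
  obtain ⟨u, hu⟩ : ∃ u, u ⬝ᵥ coreMatrix n h s w *ᵥ u = n + δ := by
    by_cases hδh : δ < h
    · exact (exists_dotProduct_coreMatrix_mulVec_eq hw hδh).1
    · obtain ⟨u, hu⟩ := (exists_dotProduct_coreMatrix_mulVec_eq hw (r := δ - h) (by omega)).2
      exact ⟨u, by rw [hu]; push_cast [Nat.le_of_not_lt hδh]; ring⟩
  obtain ⟨z, hz⟩ := exists_dotProduct_self_eq Z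
  exact ⟨Sum.elim u z, by
    rw [tightMatrix, sumElim_dotProduct_fromBlocks_mulVec, dotProduct_smul_one_mulVec, hu, hz]⟩

end TightForm

lemma succ_div_two_div_sqrt_le (n : ℕ) (hn : 0 < n) :
    (n + 1) / 2 / Nat.sqrt n ≤ (Nat.sqrt n - 1) / 2 + 2 := by
  have hs : 0 < Nat.sqrt n := Nat.sqrt_pos.mpr hn
  have hlt : n < Nat.sqrt n * Nat.sqrt n + 2 * Nat.sqrt n + 1 := by
    nlinarith [Nat.lt_succ_sqrt n]
  rw [Nat.le_iff_lt_add_one, Nat.div_lt_iff_lt_mul hs]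
  set s := Nat.sqrt n
  set u := (s - 1) / 2
  have hsq : s * s ≤ 2 * (u * s) + 2 * s := by
    nlinarith [show s ≤ 2 * u + 2 by omega]
  rw [show (u + 2 + 1) * s = u * s + 3 * s by ring]
  omega

/-- Upper bound: `t(n) ≤ ⌊(⌊√n⌋ - 1)/2⌋ + ⌊√n⌋ + 7`. -/
theorem stmt_18 (n : ℕ) (hn : 0 < n) :
    ∃ k ≤ (Nat.sqrt n - 1) / 2 + Nat.sqrt n + 7, ∃ M : Matrix (Fin k) (Fin k) ℤ,
      M.IsSymm ∧ QFPosDef M ∧ QFTight n M := by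
  have hrank := succ_div_two_div_sqrt_le n hn
  set s := Nat.sqrt n
  set h := (n + 1) / 2
  have hs : 0 < s := Nat.sqrt_pos.mpr hn
  have hw : h ≤ s * (h / s + 1) := (Nat.lt_mul_div_succ h hs).le
  obtain ⟨M, hM⟩ := exists_QFTight_of_le_of_exists_eq (tightMatrix n h s (h / s))
    isSymm_tightMatrix hn (fun y hy => le_dotProduct_tightMatrix_mulVec (by omega) (by omega) hs hy)
    (fun m hm => exists_dotProduct_tightMatrix_mulVec_eq hn (by omega) hw hm)
  refine ⟨_, ?_, M, hM⟩
  simp only [Fintype.card_sum, Fintype.card_fin, Fintype.card_unit]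
  omega
end
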